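/- Let N ⊆ M be von Neumann algebras and U = (A_{ij}) a unitary in M ⊗̄ B(K) written as an operator matrix with entries A_{ij} ∈ M. Then U(N ⊗̄ B(K))U* = N ⊗̄ B(K) if and only if A_i X A_j* ∈ N and A_i* X A_j ∈ N for all X ∈ N and all matrix entries A_i, A_j of U. -/

import Mathlib

open TopologicalSpace

noncomputable section

namespace VNPaper

variable {H : Type*} [NormedAddCommGroup H] [InnerProductSpace ℂ H] [CompleteSpace H]

/-- A unitary operator on `H`. -/
def IsUnitaryOp (U : H →L[ℂ] H) : Prop := U * star U = 1 ∧ star U * U = 1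

/-- Image of a set of operators under conjugation `x ↦ U x U*`. -/
def conjSet (U : H →L[ℂ] H) (S : Set (H →L[ℂ] H)) : Set (H →L[ℂ] H) :=
  (fun x => U * x * star U) '' S

/-- `N` is singular in `M`: the only unitaries of `M` normalizing `N` lie in `N`. -/
def SingularIn (N M : Set (H →L[ℂ] H)) : Prop :=
  ∀ U ∈ M, IsUnitaryOp U → conjSet U N = N → U ∈ N

/-- The unitary normalizer of `N` in `M`. -/
def normalizerSet (N M : Set (H →L[ℂ] H)) : Set (H →L[ℂ] H) :=
  {U | U ∈ M ∧ IsUnitaryOp U ∧ conjSet U N = N}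

/-- Partial isometry. -/
def IsPartialIsom (V : H →L[ℂ] H) : Prop := V * star V * V = V

/-- Projection (self-adjoint idempotent). -/
def IsProjOp (p : H →L[ℂ] H) : Prop := IsSelfAdjoint p ∧ p * p = p

/-- Compression `E S E` of a set of operators. -/
def compress (E : H →L[ℂ] H) (S : Set (H →L[ℂ] H)) : Set (H →L[ℂ] H) :=
  (fun x => E * x * E) '' S

/-- The normalizing groupoid of `N` in `M`: partial isometries `V ∈ M` with initial and final
projections `E, F ∈ N` such that `V (E N E) V* = F N F`. -/
def groupoidSet (N M : Set (H →L[ℂ] H)) : Set (H →L[ℂ] H) :=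
  {V | V ∈ M ∧ IsPartialIsom V ∧ star V * V ∈ N ∧ V * star V ∈ N ∧
    conjSet V (compress (star V * V) N) = compress (V * star V) N}

/-- The von Neumann algebra generated by a set of operators (double commutant). -/
def gen (S : Set (H →L[ℂ] H)) : Set (H →L[ℂ] H) :=
  Set.centralizer (Set.centralizer S)

/-- `N` is regular in `M`: the normalizer of `N` in `M` generates `M`. -/
def RegularIn (N M : Set (H →L[ℂ] H)) : Prop :=
  gen (normalizerSet N M) = M

/-- The Hilbert space `ℓ²(ι, H) = H ⊗ ℓ²(ι)`. -/
abbrev l2 (ι : Type*) (H : Type*) [NormedAddCommGroup H] [InnerProductSpace ℂ H] :=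
  lp (fun _ : ι => H) 2

/-- The `(i,j)` matrix entry of an operator on `ℓ²(ι, H)`. -/
def entry {ι : Type*} (T : l2 ι H →L[ℂ] l2 ι H) (i j : ι) : H →L[ℂ] H :=
  letI : DecidableEq ι := Classical.decEq ι
  LinearMap.mkContinuous
    { toFun := fun h => T (lp.single 2 j h) i
      map_add' := fun a b => by
        have hs : lp.single (E := fun _ : ι => H) 2 j (a + b)
            = lp.single 2 j a + lp.single 2 j b := by
          apply lp.ext
          funext k
          by_cases hk : k = j
          · subst hk
            simp [lp.single_apply_self]
          · simp [lp.single_apply_ne _ _ _ hk]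
        dsimp only
        rw [hs, map_add]
        rfl
      map_smul' := fun c a => by
        dsimp only
        rw [show lp.single (E := fun _ : ι => H) 2 j (c • a) = c • lp.single 2 j a from
          lp.single_smul (E := fun _ : ι => H) 2 j c a, map_smul]
        rfl }
    ‖T‖
    (fun h => by
      calc ‖T (lp.single 2 j h) i‖ ≤ ‖T (lp.single 2 j h)‖ :=
            lp.norm_apply_le_norm (by norm_num) _ i
        _ ≤ ‖T‖ * ‖lp.single (E := fun _ : ι => H) 2 j h‖ := T.le_opNorm _
        _ = ‖T‖ * ‖h‖ := by
            rw [show ‖lp.single (E := fun _ : ι => H) 2 j h‖ = ‖h‖ from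
              lp.norm_single (E := fun _ : ι => H) (p := 2) (by norm_num) j h])

/-- The model of `S ⊗̄ B(ℓ²(ι))` inside `B(ℓ²(ι, H))`: operators all of whose matrix
entries lie in `S`. -/
def tensorB (S : Set (H →L[ℂ] H)) (ι : Type*) : Set (l2 ι H →L[ℂ] l2 ι H) :=
  {T | ∀ i j, entry T i j ∈ S}

/-- `N` is completely singular in `M`: `N ⊗̄ B(K)` is singular in `M ⊗̄ B(K)` for every
Hilbert space `K` (modelled as `ℓ²(ι)` over all index types `ι`). -/
def CompletelySingularIn (N M : Set (H →L[ℂ] H)) : Prop :=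
  ∀ ι : Type, SingularIn (tensorB N ι) (tensorB M ι)

/-- A finite von Neumann algebra: every isometry in it is a unitary. -/
def IsFiniteVN (M : Set (H →L[ℂ] H)) : Prop :=
  ∀ V ∈ M, star V * V = 1 → V * star V = 1

/-- A factor: trivial center. -/
def IsFactorVN (M : Set (H →L[ℂ] H)) : Prop :=
  ∀ x ∈ M, (∀ y ∈ M, x * y = y * x) → ∃ c : ℂ, x = c • (1 : H →L[ℂ] H)

/-- Abelian set of operators. -/
def IsAbelianSet (S : Set (H →L[ℂ] H)) : Prop :=
  ∀ x ∈ S, ∀ y ∈ S, x * y = y * x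

/-- A type II₁ factor: an infinite-dimensional finite factor. -/
def IsII1Factor (M : VonNeumannAlgebra H) : Prop :=
  IsFiniteVN (M : Set (H →L[ℂ] H)) ∧ IsFactorVN (M : Set (H →L[ℂ] H)) ∧
    ¬ ∃ (s : Finset (H →L[ℂ] H)), (↑s ⊆ (M : Set (H →L[ℂ] H))) ∧
        ∀ x ∈ (M : Set (H →L[ℂ] H)), x ∈ Submodule.span ℂ (↑s : Set (H →L[ℂ] H))

/-- Countably decomposable: every orthogonal family of nonzero projections is countable. -/
def CountablyDecomposable (N : Set (H →L[ℂ] H)) : Prop :=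
  ∀ S : Set (H →L[ℂ] H), (∀ p ∈ S, p ∈ N ∧ IsProjOp p ∧ p ≠ 0) →
    (S.Pairwise fun p q => p * q = 0) → S.Countable

/-- Properly infinite: every nonzero central projection `z` of `N` is infinite, i.e. `z` is
Murray–von Neumann equivalent in `N` to a proper subprojection of itself. -/
def ProperlyInfinite (N : Set (H →L[ℂ] H)) : Prop :=
  ∀ z ∈ N, IsProjOp z → z ≠ 0 → (∀ y ∈ N, z * y = y * z) →
    ∃ v ∈ N, star v * v = z ∧ z * v = v ∧ v * star v ≠ z

/-- Basic-neighbourhood description of the strong-operator closure of a set of operators. -/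
def sotClosure (S : Set (H →L[ℂ] H)) : Set (H →L[ℂ] H) :=
  {T | ∀ ε : ℝ, 0 < ε → ∀ F : Finset H, ∃ X ∈ S, ∀ h ∈ F, ‖(T - X) h‖ < ε}

/-- `E` is the projection onto the closure of the range of `A`: the smallest projection `p`
with `p A = A`. -/
def IsRangeProjOf (E A : H →L[ℂ] H) : Prop :=
  IsProjOp E ∧ E * A = A ∧ ∀ p, IsProjOp p → p * A = A → (p - E).IsPositive

/-- `A = V P` is the polar decomposition of `A`: `P = (A* A)^{1/2} ≥ 0`, `V` a partial isometry
whose initial projection `V* V` is the range projection of `P`. -/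
def IsPolarDecomp (A V P : H →L[ℂ] H) : Prop :=
  A = V * P ∧ P.IsPositive ∧ P * P = star A * A ∧ IsPartialIsom V ∧
    IsRangeProjOf (star V * V) P

/-- An injective von Neumann algebra: the range of a norm-one idempotent (conditional
expectation) on `B(H)`. -/
def IsInjectiveVN (B : Set (H →L[ℂ] H)) : Prop :=
  ∃ Φ : (H →L[ℂ] H) →L[ℂ] (H →L[ℂ] H), ‖Φ‖ ≤ 1 ∧ (∀ x, Φ x ∈ B) ∧ ∀ x ∈ B, Φ x = x

end VNPaper

/-- Data realizing the spatial tensor product of operators on `H₁` and `H₂` on a Hilbert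
space `HT`: commuting embeddings `x ↦ x ⊗ 1`, `y ↦ 1 ⊗ y`, satisfying the commutation
theorem for generated von Neumann algebras. -/
structure VNTensorData (H₁ : Type*) (H₂ : Type*) (HT : Type*)
    [NormedAddCommGroup H₁] [InnerProductSpace ℂ H₁] [CompleteSpace H₁]
    [NormedAddCommGroup H₂] [InnerProductSpace ℂ H₂] [CompleteSpace H₂]
    [NormedAddCommGroup HT] [InnerProductSpace ℂ HT] [CompleteSpace HT] where
  e₁ : (H₁ →L[ℂ] H₁) →⋆ₐ[ℂ] (HT →L[ℂ] HT)
  e₂ : (H₂ →L[ℂ] H₂) →⋆ₐ[ℂ] (HT →L[ℂ] HT)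
  injective_e₁ : Function.Injective e₁
  injective_e₂ : Function.Injective e₂
  commute : ∀ x y, e₁ x * e₂ y = e₂ y * e₁ x
  commutation : ∀ (S₁ : Set (H₁ →L[ℂ] H₁)) (S₂ : Set (H₂ →L[ℂ] H₂)),
    Set.centralizer (e₁ '' S₁ ∪ e₂ '' S₂) =
      VNPaper.gen (e₁ '' Set.centralizer S₁ ∪ e₂ '' Set.centralizer S₂)

namespace VNTensorData

variable {H₁ H₂ HT : Type*}
    [NormedAddCommGroup H₁] [InnerProductSpace ℂ H₁] [CompleteSpace H₁]
    [NormedAddCommGroup H₂] [InnerProductSpace ℂ H₂] [CompleteSpace H₂]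
    [NormedAddCommGroup HT] [InnerProductSpace ℂ HT] [CompleteSpace HT]

/-- The von Neumann tensor product `S₁ ⊗̄ S₂` realized on `HT`. -/
def prod (D : VNTensorData H₁ H₂ HT) (S₁ : Set (H₁ →L[ℂ] H₁)) (S₂ : Set (H₂ →L[ℂ] H₂)) :
    Set (HT →L[ℂ] HT) :=
  VNPaper.gen (D.e₁ '' S₁ ∪ D.e₂ '' S₂)

end VNTensorData


open VNPaper

variable {H : Type*} [NormedAddCommGroup H] [InnerProductSpace ℂ H] [CompleteSpace H]

/-! The `(i, k)` entry of `V T V*` is the strongly convergent double sum `∑_q ∑_p A_ip T_pq A_kq*`,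
and a von Neumann algebra, being a double commutant, is closed under such sums. Conversely,
conjugating the operator whose only nonzero entry is `X` at `(j, l)` produces the entry
`A_ij X A_kl*`. Hence `U (N ⊗̄ B(K)) U* ⊆ N ⊗̄ B(K)` is equivalent to the first family of
conditions, and for a unitary `U` equality amounts to this inclusion for both `U` and `U*`, whose
entries are the `A_ji*`. -/

theorem Set.mem_centralizer_of_hasSum_apply {R E J : Type*} [Semiring R] [AddCommMonoid E]
    [Module R E] [TopologicalSpace E] [T2Space E] {S : Set (E →L[R] E)}
    {W : J → E →L[R] E} {Z : E →L[R] E} (hW : ∀ j, W j ∈ S.centralizer)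
    (hZ : ∀ x, HasSum (fun j => W j x) (Z x)) : Z ∈ S.centralizer := by
  intro Y hY
  ext x
  have hYZ : HasSum (fun j => Y (W j x)) (Y (Z x)) := (hZ x).map Y Y.continuous
  have hZY : HasSum (fun j => Y (W j x)) (Z (Y x)) := by
    convert hZ (Y x) using 2 with j
    exact DFunLike.congr_fun (hW j Y hY) x
  exact hYZ.unique hZY

theorem VonNeumannAlgebra.mem_of_hasSum_apply (N : VonNeumannAlgebra H) {J : Type*}
    {W : J → H →L[ℂ] H} {Z : H →L[ℂ] H} (hW : ∀ j, W j ∈ N)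
    (hZ : ∀ x, HasSum (fun j => W j x) (Z x)) : Z ∈ N := by
  simpa using Set.mem_centralizer_of_hasSum_apply
    (S := (N : Set (H →L[ℂ] H)).centralizer) (fun j => by simpa using hW j) hZ

namespace VNPaper

section

variable {E ι : Type*} [NormedAddCommGroup E] [InnerProductSpace ℂ E] [DecidableEq ι]

theorem entry_apply (T : l2 ι E →L[ℂ] l2 ι E) (i j : ι) (x : E) :
    entry T i j x = T (lp.single 2 j x) i := by
  obtain rfl : ‹DecidableEq ι› = Classical.decEq ι := Subsingleton.elim _ _
  rfl

theorem hasSum_entry_mul_apply (S T : l2 ι E →L[ℂ] l2 ι E) (i k : ι) (x : E) :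
    HasSum (fun j => entry S i j (entry T j k x)) (entry (S * T) i k x) := by
  simp only [entry_apply]
  exact (lp.hasSum_single ENNReal.ofNat_ne_top
    (T (lp.single 2 k x))).mapL ((lp.evalCLM ℂ (fun _ => E) 2 i).comp S)

theorem inner_entry_apply (T : l2 ι E →L[ℂ] l2 ι E) (i j : ι) (x y : E) :
    inner ℂ y (entry T i j x) = inner ℂ (lp.single 2 i y) (T (lp.single 2 j x)) := by
  rw [lp.inner_single_left, entry_apply]

def matrixSingle (j l : ι) (X : E →L[ℂ] E) : l2 ι E →L[ℂ] l2 ι E :=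
  (lp.singleContinuousLinearMap ℂ (fun _ => E) 2 j).comp (X.comp (lp.evalCLM ℂ (fun _ => E) 2 l))

theorem entry_matrixSingle (j l : ι) (X : E →L[ℂ] E) (i k : ι) :
    entry (matrixSingle j l X) i k = if i = j ∧ k = l then X else 0 := by
  ext x
  rw [entry_apply]
  by_cases hk : k = l <;> by_cases hi : i = j <;>
    simp [matrixSingle, lp.evalCLM, lp.single_apply, hi, hk]

end

variable {ι : Type*}

theorem entry_star (T : l2 ι H →L[ℂ] l2 ι H) (i j : ι) :
    entry (star T) i j = star (entry T j i) := by
  classical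
  ext x
  refine ext_inner_left ℂ fun y => ?_
  rw [inner_entry_apply, ContinuousLinearMap.star_eq_adjoint,
    ContinuousLinearMap.adjoint_inner_right, lp.inner_single_right,
    ContinuousLinearMap.star_eq_adjoint, ContinuousLinearMap.adjoint_inner_right, entry_apply]

theorem matrixSingle_mem_tensorB [DecidableEq ι] {N : VonNeumannAlgebra H} {X : H →L[ℂ] H}
    (hX : X ∈ N) (j l : ι) : matrixSingle j l X ∈ tensorB (N : Set (H →L[ℂ] H)) ι := by
  intro i k
  rw [entry_matrixSingle]
  split_ifs
  exacts [hX, zero_mem N]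

theorem entry_mul_matrixSingle_mul_star [DecidableEq ι] (V : l2 ι H →L[ℂ] l2 ι H)
    (X : H →L[ℂ] H) (i j k l : ι) :
    entry (V * matrixSingle j l X * star V) i k = entry V i j * X * star (entry V k l) := by
  ext x
  calc entry (V * matrixSingle j l X * star V) i k x
      = V (lp.single 2 j (X ((star V) (lp.single 2 k x) l))) i := entry_apply ..
    _ = (entry V i j * X * star (entry V k l)) x := by
      rw [← entry_apply, ← entry_apply, entry_star]; rfl

theorem mul_mul_star_mem_tensorB {N : VonNeumannAlgebra H} {V T : l2 ι H →L[ℂ] l2 ι H}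
    (hV : ∀ X ∈ N, ∀ i j k l, entry V i j * X * star (entry V k l) ∈ N)
    (hT : T ∈ tensorB (N : Set (H →L[ℂ] H)) ι) :
    V * T * star V ∈ tensorB (N : Set (H →L[ℂ] H)) ι := by
  classical
  intro i k
  refine N.mem_of_hasSum_apply (W := fun j => entry (V * T) i j * star (entry V k j))
    (fun j => N.mem_of_hasSum_apply (fun l => hV _ (hT l j) i l k j)
      fun x => hasSum_entry_mul_apply V T i j _) fun x => ?_
  have hsum := hasSum_entry_mul_apply (V * T) (star V) i k x
  simp only [entry_star] at hsum
  exact hsum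

theorem conjSet_tensorB_subset_iff (N : VonNeumannAlgebra H) (V : l2 ι H →L[ℂ] l2 ι H) :
    conjSet V (tensorB (N : Set (H →L[ℂ] H)) ι) ⊆ tensorB (N : Set (H →L[ℂ] H)) ι ↔
      ∀ X ∈ N, ∀ i j k l, entry V i j * X * star (entry V k l) ∈ N := by
  classical
  refine ⟨fun hV X hX i j k l => ?_, fun hV => ?_⟩
  · simpa only [entry_mul_matrixSingle_mul_star, SetLike.mem_coe] using
      hV ⟨_, matrixSingle_mem_tensorB hX j l, rfl⟩ i k
  · rintro _ ⟨T, hT, rfl⟩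
    exact mul_mul_star_mem_tensorB hV hT

theorem conjSet_eq_iff_of_isUnitaryOp {U : H →L[ℂ] H} (hU : IsUnitaryOp U)
    {S : Set (H →L[ℂ] H)} : conjSet U S = S ↔ conjSet U S ⊆ S ∧ conjSet (star U) S ⊆ S := by
  have cancel : ∀ {V : H →L[ℂ] H}, star V * V = 1 → ∀ x, star V * (V * x * star V) * V = x :=
    fun hV x => by simp only [← mul_assoc, hV, one_mul]; rw [mul_assoc, hV, mul_one]
  refine ⟨fun h => ⟨h.subset, ?_⟩, fun ⟨h, h'⟩ => h.antisymm fun x hx => ?_⟩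
  · rintro _ ⟨x, hx, rfl⟩
    rw [← h] at hx
    obtain ⟨y, hy, rfl⟩ := hx
    simpa only [star_star, cancel hU.2] using hy
  · refine ⟨star U * x * star (star U), h' ⟨x, hx, rfl⟩, ?_⟩
    simpa only [star_star] using cancel (V := star U) (by simpa using hU.1) x

end VNPaper

theorem unitary_normalizes_tensorB_iff_general (N : VonNeumannAlgebra H) (ι : Type)
    (U : l2 ι H →L[ℂ] l2 ι H) (hUu : IsUnitaryOp U) :
    conjSet U (tensorB (N : Set (H →L[ℂ] H)) ι) = tensorB (N : Set (H →L[ℂ] H)) ι ↔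
      ∀ X ∈ N, ∀ i j k l : ι,
        entry U i j * X * star (entry U k l) ∈ N ∧
        star (entry U i j) * X * entry U k l ∈ N := by
  rw [conjSet_eq_iff_of_isUnitaryOp hUu, conjSet_tensorB_subset_iff,
    conjSet_tensorB_subset_iff]
  simp only [entry_star, star_star]
  exact ⟨fun ⟨hU, hU'⟩ X hX i j k l => ⟨hU X hX i j k l, hU' X hX j i l k⟩,
    fun h => ⟨fun X hX i j k l => (h X hX i j k l).1, fun X hX i j k l => (h X hX j i l k).2⟩⟩

/-- A unitary `U = (A_{ij})` in `M ⊗̄ B(K)` normalizes `N ⊗̄ B(K)` iff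
`A_{ij} X A_{kl}* ∈ N` and `A_{ij}* X A_{kl} ∈ N` for all `X ∈ N` and all entries. -/
theorem unitary_normalizes_tensorB_iff (M N : VonNeumannAlgebra H)
    (hNM : (N : Set (H →L[ℂ] H)) ⊆ M) (ι : Type)
    (U : l2 ι H →L[ℂ] l2 ι H)
    (hU : U ∈ tensorB (M : Set (H →L[ℂ] H)) ι) (hUu : IsUnitaryOp U) :
    conjSet U (tensorB (N : Set (H →L[ℂ] H)) ι) = tensorB (N : Set (H →L[ℂ] H)) ι ↔
      ∀ X ∈ N, ∀ i j k l : ι,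
        entry U i j * X * star (entry U k l) ∈ N ∧
        star (entry U i j) * X * entry U k l ∈ N :=
  unitary_normalizes_tensorB_iff_general N ι U hUu
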